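/- Let Φ denote the cumulative distribution function of the standard normal distribution. For every t ≥ 0 and every 0 < σ_2 ≤ σ_1, one has t · (Φ(t/σ_2) − Φ(t/σ_1)) ≤ σ_1 − σ_2. -/
import Mathlib


open MeasureTheory

/-- The cumulative distribution function of the standard normal distribution. -/
noncomputable def stdNormalCDF (x : ℝ) : ℝ :=
  ∫ z in Set.Iic x, (Real.sqrt (2 * Real.pi))⁻¹ * Real.exp (-z ^ 2 / 2)

lemma gauss_integrable :
    MeasureTheory.Integrable (fun z : ℝ => (Real.sqrt (2 * Real.pi))⁻¹ * Real.exp (-z ^ 2 / 2)) := by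
  have h := (integrable_exp_neg_mul_sq (by norm_num : (0:ℝ) < 1/2)).const_mul
    (Real.sqrt (2 * Real.pi))⁻¹
  convert h using 2 with z
  ring_nf

lemma gauss_le_inv_sq {z : ℝ} (hz : 0 < z) :
    (Real.sqrt (2 * Real.pi))⁻¹ * Real.exp (-z ^ 2 / 2) ≤ z⁻¹ ^ 2 := by
  have hs : (2:ℝ) ≤ Real.sqrt (2 * Real.pi) := by
    have : (2:ℝ) = Real.sqrt 4 := by
      rw [show (4:ℝ) = 2 ^ 2 by norm_num, Real.sqrt_sq (by norm_num)]
    rw [this]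
    exact Real.sqrt_le_sqrt (by nlinarith [Real.pi_gt_three])
  have hs0 : (0:ℝ) < Real.sqrt (2 * Real.pi) := by linarith
  have h1 : z ^ 2 / 2 ≤ Real.exp (z ^ 2 / 2) :=
    le_trans (by linarith) (Real.add_one_le_exp _)
  have hexp : Real.exp (-z ^ 2 / 2) = (Real.exp (z ^ 2 / 2))⁻¹ := by
    rw [← Real.exp_neg]; ring_nf
  have hE : (0:ℝ) < Real.exp (z ^ 2 / 2) := Real.exp_pos _
  have key : z ^ 2 * Real.exp (-z ^ 2 / 2) ≤ 2 := by
    rw [hexp]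
    rw [mul_inv_le_iff₀ hE]
    nlinarith
  have hz2 : (0:ℝ) < z ^ 2 := by positivity
  have hEneg : (0:ℝ) < Real.exp (-z ^ 2 / 2) := Real.exp_pos _
  rw [inv_pow, ← one_div (z ^ 2), le_div_iff₀ hz2]
  calc (Real.sqrt (2 * Real.pi))⁻¹ * Real.exp (-z ^ 2 / 2) * z ^ 2
      ≤ (2:ℝ)⁻¹ * (z ^ 2 * Real.exp (-z ^ 2 / 2)) := by
        have h' : (Real.sqrt (2 * Real.pi))⁻¹ ≤ (2:ℝ)⁻¹ :=
          inv_anti₀ (by norm_num) hs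
        have hpos : (0:ℝ) ≤ Real.exp (-z ^ 2 / 2) * z ^ 2 := by positivity
        nlinarith [mul_le_mul_of_nonneg_right h' hpos]
    _ ≤ (2:ℝ)⁻¹ * 2 := by nlinarith
    _ = 1 := by norm_num

/-- For `t ≥ 0` and `0 < σ₂ ≤ σ₁`, `t * (Φ(t/σ₂) - Φ(t/σ₁)) ≤ σ₁ - σ₂`. -/
theorem cdf_difference_bound (t σ₁ σ₂ : ℝ) (ht : 0 ≤ t) (h2 : 0 < σ₂) (h12 : σ₂ ≤ σ₁) :
    t * (stdNormalCDF (t / σ₂) - stdNormalCDF (t / σ₁)) ≤ σ₁ - σ₂ := by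
  rcases eq_or_lt_of_le ht with h | ht
  · simp [← h]; linarith
  have hσ1 : 0 < σ₁ := lt_of_lt_of_le h2 h12
  set b := t / σ₁ with hbdef
  set a := t / σ₂ with hadef
  have hb : 0 < b := div_pos ht hσ1
  have hba : b ≤ a := div_le_div_of_nonneg_left ht.le h2 h12
  have ha : 0 < a := lt_of_lt_of_le hb hba
  set f : ℝ → ℝ := fun z => (Real.sqrt (2 * Real.pi))⁻¹ * Real.exp (-z ^ 2 / 2) with hf
  have hdiff : stdNormalCDF a - stdNormalCDF b = ∫ z in b..a, f z :=
    intervalIntegral.integral_Iic_sub_Iic gauss_integrable.integrableOn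
      gauss_integrable.integrableOn
  have hintf : IntervalIntegrable f volume b a :=
    gauss_integrable.intervalIntegrable
  have hintg : IntervalIntegrable (fun z : ℝ => z⁻¹ ^ 2) volume b a := by
    apply ContinuousOn.intervalIntegrable
    apply ContinuousOn.pow
    apply ContinuousOn.inv₀ continuousOn_id
    intro x hx
    rw [Set.uIcc_of_le hba] at hx
    exact ne_of_gt (lt_of_lt_of_le hb hx.1)
  have hle : ∫ z in b..a, f z ≤ ∫ z in b..a, z⁻¹ ^ 2 := by
    apply intervalIntegral.integral_mono_on hba hintf hintg
    intro x hx
    exact gauss_le_inv_sq (lt_of_lt_of_le hb hx.1)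
  have hval : ∫ z in b..a, z⁻¹ ^ 2 = b⁻¹ - a⁻¹ := by
    have h0 : (0:ℝ) ∉ Set.uIcc b a := by
      rw [Set.uIcc_of_le hba]
      intro h
      exact absurd h.1 (not_le.mpr hb)
    have := integral_zpow (a := b) (b := a) (n := -2)
      (Or.inr ⟨by norm_num, h0⟩)
    simp only [show (-2 : ℤ) + 1 = -1 by norm_num] at this
    rw [show (fun z : ℝ => z⁻¹ ^ 2) = fun z : ℝ => z ^ (-2 : ℤ) by
      funext z; rw [inv_pow, zpow_neg]; norm_num]
    rw [this]
    have hb' : b ≠ 0 := ne_of_gt hb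
    have ha' : a ≠ 0 := ne_of_gt ha
    field_simp
    ring
  have hfinal : stdNormalCDF a - stdNormalCDF b ≤ b⁻¹ - a⁻¹ := by
    rw [hdiff, ← hval]; exact hle
  have hbinv : b⁻¹ = σ₁ / t := by rw [hbdef]; field_simp
  have hainv : a⁻¹ = σ₂ / t := by rw [hadef]; field_simp
  rw [hbinv, hainv] at hfinal
  calc t * (stdNormalCDF a - stdNormalCDF b) ≤ t * (σ₁ / t - σ₂ / t) := by
        exact mul_le_mul_of_nonneg_left hfinal ht.le
    _ = σ₁ - σ₂ := by field_simp
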